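/- arXiv:1608.03697 — 3 statements merged into one kernel-verified Lean document; each statement's English description precedes it below -/
import Mathlib

section
/- Let X1, X2, X3 be discrete random variables with a strictly positive joint probability distribution. If X1 is conditionally independent of X2 given X3, and X1 is conditionally independent of X3 given X2, then X1 is independent of the pair (X2, X3). -/
/-- For discrete random variables `X1, X2, X3` with a strictly positive
joint distribution `p`, if `X1 ⊥ X2 | X3` and `X1 ⊥ X3 | X2`, then `X1 ⊥ (X2, X3)`.
Conditional independence `X ⊥ Z | Y` is expressed as
`p(x,y,z) · p(y) = p(x,y) · p(y,z)` for all `x, y, z`, with marginals given by sums. -/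
theorem stmt_0 {A B C : Type} [Fintype A] [Fintype B] [Fintype C]
    (p : A → B → C → ℝ)
    (hpos : ∀ a b c, 0 < p a b c)
    (hsum : ∑ a, ∑ b, ∑ c, p a b c = 1)
    -- X1 ⊥ X2 | X3 :  p(x1,x2,x3) · p(x3) = p(x1,x3) · p(x2,x3)
    (h12g3 : ∀ a b c,
      p a b c * (∑ a', ∑ b', p a' b' c) = (∑ b', p a b' c) * (∑ a', p a' b c))
    -- X1 ⊥ X3 | X2 :  p(x1,x2,x3) · p(x2) = p(x1,x2) · p(x2,x3)
    (h13g2 : ∀ a b c,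
      p a b c * (∑ a', ∑ c', p a' b c') = (∑ c', p a b c') * (∑ a', p a' b c)) :
    -- X1 ⊥ (X2, X3) :  p(x1,x2,x3) = p(x1) · p(x2,x3)
    ∀ a b c, p a b c = (∑ b', ∑ c', p a b' c') * (∑ a', p a' b c) := by
  intro a b c
  set s : B → C → ℝ := fun b c => ∑ a', p a' b c with hs
  have hspos : ∀ b c, 0 < s b c := fun b c =>
    Finset.sum_pos (fun i _ => hpos i b c) ⟨a, Finset.mem_univ a⟩
  -- ratio p a b c / s b c does not depend on b
  have step1 : ∀ b b' c, p a b c * s b' c = p a b' c * s b c := by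
    intro b b' c
    have hT : (0:ℝ) < ∑ a', ∑ b', p a' b' c :=
      Finset.sum_pos (fun i _ => Finset.sum_pos (fun j _ => hpos i j c)
        ⟨b, Finset.mem_univ b⟩) ⟨a, Finset.mem_univ a⟩
    apply mul_left_cancel₀ hT.ne'
    calc (∑ a', ∑ b', p a' b' c) * (p a b c * s b' c)
        = (p a b c * (∑ a', ∑ b', p a' b' c)) * s b' c := by ring
      _ = ((∑ b', p a b' c) * s b c) * s b' c := by rw [h12g3 a b c]
      _ = ((∑ b'', p a b'' c) * s b' c) * s b c := by ring
      _ = (p a b' c * (∑ a', ∑ b'', p a' b'' c)) * s b c := by rw [h12g3 a b' c]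
      _ = (∑ a', ∑ b', p a' b' c) * (p a b' c * s b c) := by ring
  -- ratio p a b c / s b c does not depend on c
  have step2 : ∀ b c c', p a b c * s b c' = p a b c' * s b c := by
    intro b c c'
    have hT : (0:ℝ) < ∑ a', ∑ c'', p a' b c'' :=
      Finset.sum_pos (fun i _ => Finset.sum_pos (fun j _ => hpos i b j)
        ⟨c, Finset.mem_univ c⟩) ⟨a, Finset.mem_univ a⟩
    apply mul_left_cancel₀ hT.ne'
    calc (∑ a', ∑ c'', p a' b c'') * (p a b c * s b c')
        = (p a b c * (∑ a', ∑ c'', p a' b c'')) * s b c' := by ring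
      _ = ((∑ c'', p a b c'') * s b c) * s b c' := by rw [h13g2 a b c]
      _ = ((∑ c'', p a b c'') * s b c') * s b c := by ring
      _ = (p a b c' * (∑ a', ∑ c'', p a' b c'')) * s b c := by rw [h13g2 a b c']
      _ = (∑ a', ∑ c'', p a' b c'') * (p a b c' * s b c) := by ring
  -- ratio independent of both
  have key : ∀ b' c', p a b' c' * s b c = p a b c * s b' c' := by
    intro b' c'
    have hA := step2 b' c c'   -- p a b' c * s b' c' = p a b' c' * s b' c
    have hB := step1 b b' c    -- p a b c * s b' c = p a b' c * s b c
    apply mul_left_cancel₀ (hspos b' c).ne'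
    calc s b' c * (p a b' c' * s b c)
        = (p a b' c' * s b' c) * s b c := by ring
      _ = (p a b' c * s b' c') * s b c := by rw [← hA]
      _ = (p a b' c * s b c) * s b' c' := by ring
      _ = (p a b c * s b' c) * s b' c' := by rw [← hB]
      _ = s b' c * (p a b c * s b' c') := by ring
  have hsum' : ∑ b', ∑ c', s b' c' = 1 := by
    calc ∑ b', ∑ c', ∑ a', p a' b' c'
        = ∑ b', ∑ a', ∑ c', p a' b' c' :=
          Finset.sum_congr rfl fun b' _ => Finset.sum_comm
      _ = ∑ a', ∑ b', ∑ c', p a' b' c' := Finset.sum_comm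
      _ = 1 := hsum
  calc p a b c = p a b c * (∑ b', ∑ c', s b' c') := by rw [hsum', mul_one]
    _ = ∑ b', ∑ c', p a b c * s b' c' := by
        rw [Finset.mul_sum]; exact Finset.sum_congr rfl fun b' _ => Finset.mul_sum _ _ _
    _ = ∑ b', ∑ c', p a b' c' * s b c := by
        exact Finset.sum_congr rfl fun b' _ => Finset.sum_congr rfl fun c' _ => (key b' c').symm
    _ = (∑ b', ∑ c', p a b' c') * s b c := by
        rw [Finset.sum_mul]; exact Finset.sum_congr rfl fun b' _ => (Finset.sum_mul _ _ _).symm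
end

section
/- Let G = (V,E) be an undirected graph and for V' ⊆ V define the graph G*(V') on vertex set V' with an edge {u,v} (u ≠ v in V') if and only if there exists a path between u and v in G all of whose intermediate vertices lie in V − V'. Then for V'' ⊆ V' ⊆ V, one has G*(V'') = (G*(V'))*(V''), i.e., the operation of forming G* is transitive under nested vertex subsets. -/
/-!
A walk in `G*(S)` expands, edge by edge, into a walk in `G` whose new vertices lie outside `S`;
conversely a walk in `G` between vertices of `S` contracts to the walk in `G*(S)` through its
vertices in `S`, taken in order. For `S = V' ⊇ V''` both transfers keep the intermediate
vertices outside `V''`.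
-/

/-- The graph `G*(S)` on vertex subset `S`: distinct `u, v ∈ S` are adjacent iff
there is a path (walk) between `u` and `v` in `G` all of whose intermediate
vertices lie outside `S`. Vertices outside `S` are isolated. -/
def GStar {V : Type} (G : SimpleGraph V) (S : Set V) : SimpleGraph V where
  Adj u v := u ≠ v ∧ u ∈ S ∧ v ∈ S ∧
    ∃ p : G.Walk u v, ∀ x ∈ p.support, x ≠ u → x ≠ v → x ∉ S
  symm := ⟨by
    rintro u v ⟨hne, hu, hv, p, hp⟩
    refine ⟨hne.symm, hv, hu, p.reverse, ?_⟩
    intro x hx hxv hxu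
    exact hp x (by simpa [SimpleGraph.Walk.support_reverse] using hx) hxu hxv⟩
  loopless := ⟨fun u h => h.1 rfl⟩

/-- `a` and `b` are joined by a walk in `G` whose vertices all lie in `A`
(i.e. they are in the same component of the induced subgraph on `A`). -/
def ReachIn {V : Type} (G : SimpleGraph V) (A : Set V) (a b : V) : Prop :=
  ∃ p : G.Walk a b, ∀ x ∈ p.support, x ∈ A

open SimpleGraph

section

variable {V : Type} {G : SimpleGraph V} {S : Set V}

lemma exists_walk_of_gStar_walk {u v : V} (q : (GStar G S).Walk u v) :
    ∃ p : G.Walk u v, ∀ x ∈ p.support, x ∈ q.support ∨ x ∉ S := by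
  induction q with
  | nil => exact ⟨Walk.nil, by simp⟩
  | @cons a b c hab q' ih =>
    obtain ⟨-, -, -, p₀, hp₀⟩ := hab
    obtain ⟨p', hp'⟩ := ih
    refine ⟨p₀.append p', fun x hx => ?_⟩
    rw [Walk.mem_support_append_iff] at hx
    rcases hx with hx | hx
    · by_cases hxa : x = a
      · simp [hxa]
      by_cases hxb : x = b
      · subst hxb
        exact Or.inl (List.mem_cons_of_mem _ q'.start_mem_support)
      exact Or.inr (hp₀ x hx hxa hxb)
    · rcases hp' x hx with hx' | hx'
      · exact Or.inl (List.mem_cons_of_mem _ hx')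
      · exact Or.inr hx'

/-- The walk `r` is the part of `r.append p` already travelled since its last vertex in `S`. -/
lemma exists_gStar_walk_of_append {w v : V} (p : G.Walk w v) (hv : v ∈ S) {u : V} (hu : u ∈ S)
    (r : G.Walk u w) (hr : ∀ x ∈ r.support, x ≠ u → x ∉ S) :
    ∃ q : (GStar G S).Walk u v, q.support ⊆ r.support ++ p.support := by
  induction p generalizing u with
  | nil =>
    obtain rfl : u = _ := by_contra fun hne => hr _ r.end_mem_support (Ne.symm hne) hv
    exact ⟨Walk.nil, by simp⟩
  | @cons a b c hab p' ih =>
    have hr' : ∀ x ∈ (r.concat hab).support, x ≠ u → x ≠ b → x ∉ S := by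
      intro x hx hxu hxb
      rw [Walk.support_concat, List.mem_append, List.mem_singleton] at hx
      exact hx.elim (hr x · hxu) (absurd · hxb)
    by_cases hb : b ∈ S
    · obtain ⟨q', hq'⟩ := ih hv hb Walk.nil (by simp)
      have hq'p : q'.support ⊆ p'.support := fun x hx => by
        rcases (by simpa using hq' hx : x = b ∨ x ∈ p'.support) with rfl | hx'
        exacts [p'.start_mem_support, hx']
      by_cases hub : u = b
      · subst hub
        exact ⟨q', fun x hx => by simp [hq'p hx]⟩
      refine ⟨Walk.cons ⟨hub, hu, hb, r.concat hab, hr'⟩ q', ?_⟩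
      rw [Walk.support_cons]
      exact List.cons_subset.2 ⟨by simp, fun x hx => by simp [hq'p hx]⟩
    · obtain ⟨q, hq⟩ := ih hv hu (r.concat hab) fun x hx hxu => by
        by_cases hxb : x = b
        · exact hxb ▸ hb
        · exact hr' x hx hxu hxb
      refine ⟨q, List.Subset.trans hq fun x hx => ?_⟩
      simp only [Walk.support_concat, Walk.support_cons, List.mem_append, List.mem_cons,
        List.not_mem_nil, or_false] at hx ⊢
      rcases hx with (hx | rfl) | hx
      exacts [Or.inl hx, Or.inr (Or.inr p'.start_mem_support), Or.inr (Or.inr hx)]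

lemma exists_gStar_walk_of_walk {u v : V} (p : G.Walk u v) (hu : u ∈ S) (hv : v ∈ S) :
    ∃ q : (GStar G S).Walk u v, q.support ⊆ p.support := by
  obtain ⟨q, hq⟩ := exists_gStar_walk_of_append p hv hu Walk.nil (by simp)
  exact ⟨q, List.Subset.trans hq (by simp [List.subset_def])⟩
end

/-- For nested vertex subsets `V'' ⊆ V' ⊆ V`,
`G*(V'') = (G*(V'))*(V'')`. -/
theorem stmt_3 {V : Type} (G : SimpleGraph V) (V' V'' : Set V) (h : V'' ⊆ V') :
    GStar G V'' = GStar (GStar G V') V'' := by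
  ext u v
  constructor
  · rintro ⟨hne, hu, hv, p, hp⟩
    obtain ⟨q, hq⟩ := exists_gStar_walk_of_walk (S := V') p (h hu) (h hv)
    exact ⟨hne, hu, hv, q, fun x hx => hp x (hq hx)⟩
  · rintro ⟨hne, hu, hv, q, hq⟩
    obtain ⟨p, hp⟩ := exists_walk_of_gStar_walk q
    refine ⟨hne, hu, hv, p, fun x hx hxu hxv hx'' => ?_⟩
    rcases hp x hx with hxq | hxV'
    · exact hq x hxq hxu hxv hx''
    · exact hxV' (h hx'')
end

section
/- Let G = (V,E) be a graph, V' ⊆ V, and let G*(V') be defined as the graph on V' with edges {u,v} iff there is a path in G between u and v whose intermediate vertices lie in V − V'. If T ⊆ V' is a cutset in G*(V') (i.e., removing T disconnects G*(V')), then T is also a cutset in G. -/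
/-! A walk in `G` between two vertices of `S` is cut at its vertices in `S` into segments whose
interior avoids `S`, i.e. into edges of `G*(S)`. The resulting walk in `G*(S)` only visits
vertices of the original walk, so a walk avoiding `T` in `G` yields one avoiding `T` in `G*(S)`. -/

namespace ReachIn

variable {V : Type} {G : SimpleGraph V} {A : Set V} {a b u v : V}

theorem refl (ha : a ∈ A) : ReachIn G A a a :=
  ⟨.nil, fun x hx => by
    rw [SimpleGraph.Walk.support_nil, List.mem_singleton] at hx
    rwa [hx]⟩

theorem cons (hab : G.Adj a b) (ha : a ∈ A) (h : ReachIn G A b u) : ReachIn G A a u := by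
  obtain ⟨p, hp⟩ := h
  refine ⟨.cons hab p, fun x hx => ?_⟩
  rcases List.mem_cons.mp (SimpleGraph.Walk.support_cons hab p ▸ hx) with rfl | hx
  exacts [ha, hp x hx]

theorem concat (h : ReachIn G A a u) (huv : G.Adj u v) (hv : v ∈ A) : ReachIn G A a v := by
  obtain ⟨p, hp⟩ := h
  refine ⟨p.concat huv, fun x hx => ?_⟩
  rw [SimpleGraph.Walk.support_concat, List.mem_append, List.mem_singleton] at hx
  rcases hx with hx | rfl
  exacts [hp x hx, hv]

end ReachIn

section GStar

variable {V : Type} {G : SimpleGraph V} {S A : Set V} {a b u v : V}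

theorem gStar_adj_of_reachIn_of_adj (hav : a ≠ v) (ha : a ∈ S) (hv : v ∈ S)
    (h : ReachIn G (insert a Sᶜ) a u) (huv : G.Adj u v) : (GStar G S).Adj a v := by
  obtain ⟨p, hp⟩ := h
  refine ⟨hav, ha, hv, p.concat huv, fun x hx hxa hxv => ?_⟩
  rw [SimpleGraph.Walk.support_concat, List.mem_append, List.mem_singleton] at hx
  exact (hp x (hx.resolve_right hxv)).resolve_left hxa

/-- `h` is the segment `a ⋯ u` of the walk read since its last vertex `a` in `S`. -/
theorem reachIn_gStar_of_walk (p : G.Walk u b) (hp : ∀ x ∈ p.support, x ∈ A)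
    (hb : b ∈ S) (ha : a ∈ S) (haA : a ∈ A) (h : ReachIn G (insert a Sᶜ) a u) :
    ReachIn (GStar G S) A a b := by
  induction p generalizing a with
  | @nil u =>
    obtain ⟨w, hw⟩ := h
    obtain rfl : u = a := (hw u w.end_mem_support).resolve_right (not_not.mpr hb)
    exact ReachIn.refl haA
  | @cons u v b huv q ih =>
    have hq : ∀ x ∈ q.support, x ∈ A := fun x hx => hp x (List.mem_cons_of_mem u hx)
    by_cases hv : v ∈ S
    · have hvb : ReachIn (GStar G S) A v b :=
        ih hq hb hv (hq v q.start_mem_support) (ReachIn.refl (Set.mem_insert v _))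
      by_cases hav : a = v
      · exact hav ▸ hvb
      · exact .cons (gStar_adj_of_reachIn_of_adj hav ha hv h huv) haA hvb
    · exact ih hq hb ha haA (h.concat huv (Set.mem_insert_of_mem a hv))

theorem ReachIn.gStar (h : ReachIn G A a b) (ha : a ∈ S) (hb : b ∈ S) :
    ReachIn (GStar G S) A a b := by
  obtain ⟨p, hp⟩ := h
  exact reachIn_gStar_of_walk p hp hb ha (hp a p.start_mem_support)
    (ReachIn.refl (Set.mem_insert a _))

end GStar

theorem stmt_7_general {V : Type} (G : SimpleGraph V)
    (V' : Set V) (T : Set V)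
    (hcut : ∃ a b : V, a ∈ V' ∧ b ∈ V' ∧ a ∉ T ∧ b ∉ T ∧
      ¬ ReachIn (GStar G V') Tᶜ a b) :
    ∃ a b : V, a ∉ T ∧ b ∉ T ∧ ¬ ReachIn G Tᶜ a b := by
  obtain ⟨a, b, ha, hb, haT, hbT, hab⟩ := hcut
  exact ⟨a, b, haT, hbT, fun h => hab (h.gStar ha hb)⟩

/-- If `T ⊆ V'` is a cutset in `G*(V')` (removing `T` leaves two
vertices of `V'` not connected within the complement of `T`), then `T` is also a
cutset in `G`.  `G` is a finite connected simple graph. -/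
theorem stmt_7 {V : Type} [Fintype V] (G : SimpleGraph V) (hG : G.Connected)
    (V' : Set V) (T : Set V) (hT : T ⊆ V')
    (hcut : ∃ a b : V, a ∈ V' ∧ b ∈ V' ∧ a ∉ T ∧ b ∉ T ∧
      ¬ ReachIn (GStar G V') Tᶜ a b) :
    ∃ a b : V, a ∉ T ∧ b ∉ T ∧ ¬ ReachIn G Tᶜ a b :=
  stmt_7_general G V' T hcut
end
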